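/- Let G be a countable directed graph. Any path w ∈ 𝔽⁺(G) decomposes uniquely as a product w = w_l v_l w_{l-1} v_{l-1} ⋯ w_1 v_1 w_0, where each w_i is either a vertex (a path of length zero) or a path all of whose edges lie in a single transitive component of G, and each v_i is an edge whose source and range lie in distinct transitive components of G. -/

import Mathlib

noncomputable section

/-! ## Countable directed graphs and their path spaces -/

/-- A countable directed graph: countable sets of vertices and edges together
with source and range maps. -/
structure DGraph : Type 1 where
  V : Type
  E : Type
  countV : Countable V
  countE : Countable E
  src : E → V
  rng : E → V

namespace DGraph

variable (G : DGraph)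

instance : Countable G.V := G.countV
instance : Countable G.E := G.countE

/-- A path of positive length is a nonempty list of edges `[e_k, …, e_1]`
(written right to left) with `s(e_{i+1}) = r(e_i)`; a path of length zero is a vertex. -/
def Path : Type := G.V ⊕ {l : List G.E // l ≠ [] ∧ List.Chain' (fun a b => G.src a = G.rng b) l}

instance : Countable G.Path := by
  unfold Path; infer_instance

/-- The source vertex of a path. -/
def psrc : G.Path → G.V
  | .inl x => x
  | .inr l => G.src (l.1.getLast l.2.1)

/-- The range vertex of a path. -/
def prng : G.Path → G.V
  | .inl x => x
  | .inr l => G.rng (l.1.head l.2.1)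

/-- The product `p q` is defined exactly when `s(p) = r(q)`. -/
def Composable (p q : G.Path) : Prop := G.psrc p = G.prng q

/-- Composition of composable paths (`pcomp p q _` is the path "first `q`, then `p`"). -/
def pcomp : (p q : G.Path) → G.Composable p q → G.Path
  | .inl _, q, _ => q
  | .inr l, .inl _, _ => .inr l
  | .inr l, .inr m, h => .inr ⟨l.1 ++ m.1, by
      refine ⟨by simp [l.2.1], l.2.2.append m.2.2 ?_⟩
      intro a ha b hb
      rw [List.getLast?_eq_getLast_of_ne_nil l.2.1, Option.mem_some_iff] at ha
      rw [List.head?_eq_head m.2.1, Option.mem_some_iff] at hb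
      subst ha; subst hb
      exact h⟩

/-- The length of a path. -/
def plen : G.Path → ℕ
  | .inl _ => 0
  | .inr l => l.1.length

/-- The list of edges of a path (ordered from last edge traversed to first). -/
def pedges : G.Path → List G.E
  | .inl _ => []
  | .inr l => l.1

/-- A vertex regarded as a path of length zero. -/
def vpath (x : G.V) : G.Path := .inl x

/-- An edge regarded as a path of length one. -/
def epath (e : G.E) : G.Path := .inr ⟨[e], by exact ⟨by simp, List.isChain_singleton e⟩⟩

/-- There is a directed path from `x` to `y`. -/
def Reach (x y : G.V) : Prop := ∃ p : G.Path, G.psrc p = x ∧ G.prng p = y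

/-- `x` and `y` are adjacent in the underlying undirected graph. -/
def UAdj (x y : G.V) : Prop :=
  ∃ e : G.E, (G.src e = x ∧ G.rng e = y) ∨ (G.src e = y ∧ G.rng e = x)

/-- `x` and `y` lie in the same connected component of the underlying undirected graph. -/
def SameUComp : G.V → G.V → Prop := Relation.ReflTransGen G.UAdj

/-- `G` is transitive in each component: any two vertices in the same connected component
of the underlying undirected graph are joined by a directed path. -/
def TransitiveInComponents : Prop := ∀ x y : G.V, G.SameUComp x y → G.Reach x y

/-- `x` and `y` are mutually reachable, i.e. lie in the same transitive component. -/
def MutReach (x y : G.V) : Prop := G.Reach x y ∧ G.Reach y x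

/-- The vertex `x` supports a loop edge. -/
def HasLoop (x : G.V) : Prop := ∃ e : G.E, G.src e = x ∧ G.rng e = x

/-- The vertex `x` supports a cycle (a path of positive length from `x` to `x`). -/
def OnCycle (x : G.V) : Prop := ∃ p : G.Path, 0 < G.plen p ∧ G.psrc p = x ∧ G.prng p = x

end DGraph

namespace DGraph

variable (G : DGraph)

/-- All edges of the path `p` lie in a single transitive component of `G`. -/
def InOneComponent (p : G.Path) : Prop :=
  ∃ c : G.V, ∀ e ∈ G.pedges p, G.MutReach (G.src e) c ∧ G.MutReach (G.rng e) c

/-- The edge list of the alternating product `w_l v_l w_{l-1} ⋯ w_1 v_1 w_0`. -/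
def altEdges : (l : ℕ) → (Fin (l + 1) → G.Path) → (Fin l → G.E) → List G.E
  | 0, ws, _ => G.pedges (ws 0)
  | l + 1, ws, vs =>
      G.pedges (ws (Fin.last (l + 1))) ++
        vs (Fin.last l) :: altEdges l (fun i => ws i.castSucc) (fun i => vs i.castSucc)

/-- `w = w_l v_l w_{l-1} ⋯ w_1 v_1 w_0` is a decomposition of the path `w` in which every
`w_i` is a vertex or a path whose edges lie in a single transitive component, and every
`v_i` is an edge whose source and range lie in distinct transitive components. -/
structure IsDecompOf (w : G.Path) (l : ℕ) (ws : Fin (l + 1) → G.Path)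
    (vs : Fin l → G.E) : Prop where
  pieces : ∀ i, G.InOneComponent (ws i)
  crossings : ∀ i : Fin l, ¬ G.MutReach (G.src (vs i)) (G.rng (vs i))
  edges_eq : G.pedges w = G.altEdges l ws vs
  src_eq : G.psrc w = G.psrc (ws 0)
  rng_eq : G.prng w = G.prng (ws (Fin.last l))
  chain_src : ∀ i : Fin l, G.src (vs i) = G.prng (ws i.castSucc)
  chain_rng : ∀ i : Fin l, G.psrc (ws i.succ) = G.rng (vs i)

end DGraph

/-! Induction on the length of the path, adding or removing its final edge `e`. An edge whose
ends are mutually reachable extends the top piece `w_l`: consecutive edges share a vertex, so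
it stays in the component of `w_l`. Any other edge becomes a new crossing edge `v_{l+1}`, under
the vertex `r(e)` as new top piece. Conversely, in every decomposition the final edge lies in
`w_l` if that piece is not a vertex and is `v_l` otherwise, and removing it leaves a
decomposition of the shorter path, which is unique by induction. -/

namespace DGraph

variable {G : DGraph}

open Function

lemma isChain_pedges (p : G.Path) : List.IsChain (fun a b => G.src a = G.rng b) (G.pedges p) := by
  cases p with
  | inl => exact List.isChain_nil
  | inr l => exact l.2.2

lemma psrc_eq_src_getLast {p : G.Path} (h : G.pedges p ≠ []) :
    G.psrc p = G.src ((G.pedges p).getLast h) := by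
  cases p with
  | inl => exact absurd rfl h
  | inr => rfl

lemma prng_eq_rng_head {p : G.Path} (h : G.pedges p ≠ []) :
    G.prng p = G.rng ((G.pedges p).head h) := by
  cases p with
  | inl => exact absurd rfl h
  | inr => rfl

lemma prng_eq_psrc_of_pedges_eq_nil {p : G.Path} (h : G.pedges p = []) :
    G.prng p = G.psrc p := by
  cases p with
  | inl => rfl
  | inr l => exact absurd h l.2.1

@[simp] lemma pedges_vpath (x : G.V) : G.pedges (G.vpath x) = [] := rfl

@[simp] lemma psrc_vpath (x : G.V) : G.psrc (G.vpath x) = x := rfl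

@[simp] lemma prng_vpath (x : G.V) : G.prng (G.vpath x) = x := rfl

lemma Path.ext {p q : G.Path} (he : G.pedges p = G.pedges q) (hs : G.psrc p = G.psrc q) :
    p = q := by
  cases p with
  | inl => cases q with
    | inl => exact congrArg Sum.inl hs
    | inr m => exact absurd he.symm m.2.1
  | inr l => cases q with
    | inl => exact absurd he l.2.1
    | inr => exact congrArg Sum.inr (Subtype.ext he)

lemma pedges_pcomp (p q : G.Path) (h : G.Composable p q) :
    G.pedges (G.pcomp p q h) = G.pedges p ++ G.pedges q := by
  cases p <;> cases q <;> simp [pcomp, pedges]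

lemma psrc_pcomp (p q : G.Path) (h : G.Composable p q) :
    G.psrc (G.pcomp p q h) = G.psrc q := by
  by_cases hq : G.pedges q = []
  · cases p with
    | inl => rfl
    | inr => cases q with
      | inl => exact h
      | inr m => exact absurd hq m.2.1
  · have hpq : G.pedges (G.pcomp p q h) ≠ [] := by simp [pedges_pcomp, hq]
    rw [psrc_eq_src_getLast hpq, psrc_eq_src_getLast hq]
    simp [pedges_pcomp, List.getLast_append_of_ne_nil _ hq]

lemma prng_pcomp (p q : G.Path) (h : G.Composable p q) :
    G.prng (G.pcomp p q h) = G.prng p := by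
  by_cases hp : G.pedges p = []
  · rw [prng_eq_psrc_of_pedges_eq_nil hp, h]
    cases p with
    | inl => rfl
    | inr l => exact absurd hp l.2.1
  · have hpq : G.pedges (G.pcomp p q h) ≠ [] := by simp [pedges_pcomp, hp]
    rw [prng_eq_rng_head hpq, prng_eq_rng_head hp]
    simp [pedges_pcomp, List.head_append_of_ne_nil hp]

lemma Reach.refl (x : G.V) : G.Reach x x := ⟨G.vpath x, rfl, rfl⟩

lemma Reach.trans {x y z : G.V} (hxy : G.Reach x y) (hyz : G.Reach y z) : G.Reach x z := by
  obtain ⟨p, rfl, rfl⟩ := hxy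
  obtain ⟨q, hq, rfl⟩ := hyz
  exact ⟨G.pcomp q p hq, psrc_pcomp q p hq, prng_pcomp q p hq⟩

lemma MutReach.refl (x : G.V) : G.MutReach x x := ⟨Reach.refl x, Reach.refl x⟩

lemma MutReach.symm {x y : G.V} (h : G.MutReach x y) : G.MutReach y x := ⟨h.2, h.1⟩

lemma MutReach.trans {x y z : G.V} (hxy : G.MutReach x y) (hyz : G.MutReach y z) :
    G.MutReach x z :=
  ⟨hxy.1.trans hyz.1, hyz.2.trans hxy.2⟩

-- `e` alone when `e` cannot be prepended to `p`.
open Classical in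
variable (G) in
def consPath (e : G.E) (p : G.Path) : G.Path :=
  if h : G.Composable (G.epath e) p then G.pcomp (G.epath e) p h else G.epath e

lemma pedges_consPath {e : G.E} {p : G.Path} (h : G.src e = G.prng p) :
    G.pedges (G.consPath e p) = e :: G.pedges p := by
  rw [consPath, dif_pos (show G.Composable (G.epath e) p from h), pedges_pcomp]
  rfl

lemma psrc_consPath {e : G.E} {p : G.Path} (h : G.src e = G.prng p) :
    G.psrc (G.consPath e p) = G.psrc p := by
  rw [consPath, dif_pos (show G.Composable (G.epath e) p from h), psrc_pcomp]

@[simp]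
lemma prng_consPath (e : G.E) (p : G.Path) : G.prng (G.consPath e p) = G.rng e := by
  unfold consPath
  split_ifs
  · exact prng_pcomp _ _ _
  · rfl

variable (G) in
def tailPath : G.Path → G.Path
  | .inl x => .inl x
  | .inr ⟨[], h⟩ => (h.1 rfl).elim
  | .inr ⟨[e], _⟩ => .inl (G.src e)
  | .inr ⟨_ :: f :: t, h⟩ => .inr ⟨f :: t, List.cons_ne_nil f t, h.2.tail⟩

lemma pedges_tailPath (p : G.Path) : G.pedges (G.tailPath p) = (G.pedges p).tail := by
  rcases p with _ | ⟨_ | ⟨e, _ | ⟨f, t⟩⟩, h⟩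
  · rfl
  · exact (h.1 rfl).elim
  · rfl
  · rfl

lemma psrc_tailPath (p : G.Path) : G.psrc (G.tailPath p) = G.psrc p := by
  rcases p with _ | ⟨_ | ⟨e, _ | ⟨f, t⟩⟩, h⟩
  · rfl
  · exact (h.1 rfl).elim
  · rfl
  · exact congrArg G.src List.getLast_cons_cons.symm

lemma src_eq_prng_tailPath {p : G.Path} {e : G.E} {t : List G.E} (h : G.pedges p = e :: t) :
    G.src e = G.prng (G.tailPath p) := by
  have ht : G.pedges (G.tailPath p) = t := by rw [pedges_tailPath, h, List.tail_cons]
  cases t with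
  | nil =>
    rw [prng_eq_psrc_of_pedges_eq_nil ht, psrc_tailPath, psrc_eq_src_getLast (by simp [h])]
    simp [h]
  | cons f t =>
    have hc := isChain_pedges p
    rw [h, List.isChain_cons_cons] at hc
    rw [prng_eq_rng_head (by simp [ht]), hc.1]
    simp [ht]

lemma consPath_tailPath {p : G.Path} {e : G.E} {t : List G.E} (h : G.pedges p = e :: t) :
    G.consPath e (G.tailPath p) = p := by
  have he := src_eq_prng_tailPath h
  apply Path.ext
  · rw [pedges_consPath he, pedges_tailPath, h, List.tail_cons]
  · rw [psrc_consPath he, psrc_tailPath]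

lemma InOneComponent.mutReach {p : G.Path} (hp : G.InOneComponent p) {e : G.E}
    (he : e ∈ G.pedges p) : G.MutReach (G.src e) (G.rng e) := by
  obtain ⟨c, hc⟩ := hp
  exact (hc e he).1.trans (hc e he).2.symm

lemma inOneComponent_of_pedges_eq_nil {p : G.Path} (h : G.pedges p = []) :
    G.InOneComponent p :=
  ⟨G.psrc p, by simp [h]⟩

lemma InOneComponent.tailPath {p : G.Path} (hp : G.InOneComponent p) :
    G.InOneComponent (G.tailPath p) := by
  obtain ⟨c, hc⟩ := hp
  exact ⟨c, fun e he => hc e (List.mem_of_mem_tail (pedges_tailPath p ▸ he))⟩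

lemma InOneComponent.consPath {e : G.E} {p : G.Path} (hp : G.InOneComponent p)
    (h : G.src e = G.prng p) (hm : G.MutReach (G.src e) (G.rng e)) :
    G.InOneComponent (G.consPath e p) := by
  rw [InOneComponent, pedges_consPath h]
  cases hL : G.pedges p with
  | nil => exact ⟨G.src e, by simpa using ⟨MutReach.refl _, hm.symm⟩⟩
  | cons g t =>
    obtain ⟨c, hc⟩ := hp
    have hec : G.MutReach (G.src e) c := by
      rw [h, prng_eq_rng_head (by simp [hL])]
      simpa [hL] using (hc g (by simp [hL])).2
    refine ⟨c, ?_⟩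
    rw [← hL, List.forall_mem_cons]
    exact ⟨⟨hec, hm.symm.trans hec⟩, hc⟩

lemma altEdges_update_last {l : ℕ} (ws : Fin (l + 1) → G.Path) (vs : Fin l → G.E)
    {p q : G.Path} {e : G.E} (h : G.pedges p = e :: G.pedges q) :
    G.altEdges l (update ws (Fin.last l) p) vs =
      e :: G.altEdges l (update ws (Fin.last l) q) vs := by
  cases l with
  | zero => simp [altEdges, h]
  | succ l => simp [altEdges, h, Fin.castSucc_ne_last]

lemma psrc_update {n : ℕ} (ws : Fin n → G.Path) {i : Fin n} {p : G.Path}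
    (h : G.psrc p = G.psrc (ws i)) (j : Fin n) : G.psrc (update ws i p j) = G.psrc (ws j) := by
  rcases eq_or_ne j i with rfl | hj
  · rw [update_self, h]
  · rw [update_of_ne hj]

lemma isDecompOf_single {w : G.Path} (hw : G.InOneComponent w) :
    G.IsDecompOf w 0 (fun _ => w) Fin.elim0 :=
  ⟨fun _ => hw, fun i => i.elim0, rfl, rfl, rfl, fun i => i.elim0, fun i => i.elim0⟩

section IsDecompOf

variable {w : G.Path} {l : ℕ} {ws : Fin (l + 1) → G.Path} {vs : Fin l → G.E} {e : G.E}

theorem IsDecompOf.consPath_of_mutReach (hd : G.IsDecompOf w l ws vs)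
    (he : G.src e = G.prng w) (hm : G.MutReach (G.src e) (G.rng e)) :
    G.IsDecompOf (G.consPath e w) l (update ws (Fin.last l) (G.consPath e (ws (Fin.last l))))
      vs := by
  have he' : G.src e = G.prng (ws (Fin.last l)) := he.trans hd.rng_eq
  have hsrc := psrc_update ws (psrc_consPath he')
  refine ⟨?_, hd.crossings, ?_, ?_, ?_, fun i => ?_, fun i => ?_⟩
  · rw [forall_update_iff ws (fun _ p => G.InOneComponent p)]
    exact ⟨(hd.pieces _).consPath he' hm, fun i _ => hd.pieces i⟩
  · rw [pedges_consPath he, hd.edges_eq, altEdges_update_last ws vs (pedges_consPath he'),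
      update_eq_self]
  · rw [psrc_consPath he, hd.src_eq, hsrc]
  · simp
  · rw [update_of_ne (Fin.castSucc_lt_last i).ne]
    exact hd.chain_src i
  · rw [hsrc]
    exact hd.chain_rng i

theorem IsDecompOf.consPath_of_not_mutReach (hd : G.IsDecompOf w l ws vs)
    (he : G.src e = G.prng w) (hm : ¬ G.MutReach (G.src e) (G.rng e)) :
    G.IsDecompOf (G.consPath e w) (l + 1) (Fin.snoc ws (G.vpath (G.rng e))) (Fin.snoc vs e) := by
  refine ⟨?_, ?_, ?_, ?_, ?_, ?_, ?_⟩
  · refine Fin.lastCases ?_ fun i => ?_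
    · simpa using inOneComponent_of_pedges_eq_nil (pedges_vpath (G.rng e))
    · simpa using hd.pieces i
  · refine Fin.lastCases ?_ fun i => ?_
    · simpa using hm
    · simpa using hd.crossings i
  · rw [pedges_consPath he, hd.edges_eq]
    simp [altEdges]
  · rw [psrc_consPath he, hd.src_eq]
    simp
  · simp
  · refine Fin.lastCases ?_ fun i => ?_
    · simpa [← hd.rng_eq] using he
    · simpa using hd.chain_src i
  · refine Fin.lastCases ?_ fun i => ?_
    · simp
    · rw [Fin.succ_castSucc, Fin.snoc_castSucc, Fin.snoc_castSucc]
      exact hd.chain_rng i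

lemma altEdges_eq_cons_of_pedges_last_eq_cons {t : List G.E}
    (htop : G.pedges (ws (Fin.last l)) = e :: t) :
    G.altEdges l ws vs =
      e :: G.altEdges l (update ws (Fin.last l) (G.tailPath (ws (Fin.last l)))) vs := by
  conv_lhs => rw [← update_eq_self (Fin.last l) ws]
  exact altEdges_update_last ws vs (by rw [pedges_tailPath, htop, List.tail_cons])

theorem IsDecompOf.tailPath_of_pedges_last_eq_cons {t : List G.E}
    (hd : G.IsDecompOf w l ws vs) (htop : G.pedges (ws (Fin.last l)) = e :: t) :
    G.IsDecompOf (G.tailPath w) l (update ws (Fin.last l) (G.tailPath (ws (Fin.last l)))) vs := by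
  have hw := hd.edges_eq.trans (altEdges_eq_cons_of_pedges_last_eq_cons htop)
  have hsrc := psrc_update ws (psrc_tailPath (ws (Fin.last l)))
  refine ⟨?_, hd.crossings, ?_, ?_, ?_, fun i => ?_, fun i => ?_⟩
  · rw [forall_update_iff ws (fun _ p => G.InOneComponent p)]
    exact ⟨(hd.pieces _).tailPath, fun i _ => hd.pieces i⟩
  · rw [pedges_tailPath, hw, List.tail_cons]
  · rw [psrc_tailPath, hd.src_eq, hsrc]
  · rw [update_self, ← src_eq_prng_tailPath hw, ← src_eq_prng_tailPath htop]
  · rw [update_of_ne (Fin.castSucc_lt_last i).ne]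
    exact hd.chain_src i
  · rw [hsrc]
    exact hd.chain_rng i

end IsDecompOf

theorem IsDecompOf.tailPath_of_pedges_last_eq_nil {w : G.Path} {l : ℕ}
    {ws : Fin (l + 2) → G.Path} {vs : Fin (l + 1) → G.E} (hd : G.IsDecompOf w (l + 1) ws vs)
    (htop : G.pedges (ws (Fin.last (l + 1))) = []) :
    G.IsDecompOf (G.tailPath w) l (Fin.init ws) (Fin.init vs) := by
  have hw : G.pedges w = vs (Fin.last l) :: G.altEdges l (Fin.init ws) (Fin.init vs) := by
    rw [hd.edges_eq, altEdges, htop]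
    rfl
  refine ⟨fun i => hd.pieces _, fun i => hd.crossings _, ?_, ?_, ?_, fun i => ?_, fun i => ?_⟩
  · rw [pedges_tailPath, hw, List.tail_cons]
  · rw [psrc_tailPath, hd.src_eq]
    rfl
  · rw [← src_eq_prng_tailPath hw]
    exact hd.chain_src (Fin.last l)
  · exact hd.chain_src i.castSucc
  · simpa [Fin.init, ← Fin.succ_castSucc] using hd.chain_rng i.castSucc

variable (G) in
abbrev Decomp : Type := (l : ℕ) × ((Fin (l + 1) → G.Path) × (Fin l → G.E))

variable (G) in
abbrev IsDecomp (w : G.Path) (d : G.Decomp) : Prop := G.IsDecompOf w d.1 d.2.1 d.2.2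

open Classical in
def Decomp.cons (e : G.E) : G.Decomp → G.Decomp
  | ⟨l, ws, vs⟩ =>
    if G.MutReach (G.src e) (G.rng e) then
      ⟨l, update ws (Fin.last l) (G.consPath e (ws (Fin.last l))), vs⟩
    else ⟨l + 1, Fin.snoc ws (G.vpath (G.rng e)), Fin.snoc vs e⟩

theorem IsDecomp.consPath {w : G.Path} {d : G.Decomp} {e : G.E} (hd : G.IsDecomp w d)
    (he : G.src e = G.prng w) : G.IsDecomp (G.consPath e w) (Decomp.cons e d) := by
  obtain ⟨l, ws, vs⟩ := d
  by_cases hm : G.MutReach (G.src e) (G.rng e)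
  · rw [Decomp.cons, if_pos hm]
    exact hd.consPath_of_mutReach he hm
  · rw [Decomp.cons, if_neg hm]
    exact hd.consPath_of_not_mutReach he hm

theorem IsDecomp.exists_eq_cons {w : G.Path} {d : G.Decomp} {e : G.E} {t : List G.E}
    (hd : G.IsDecomp w d) (hw : G.pedges w = e :: t) :
    ∃ d', G.IsDecomp (G.tailPath w) d' ∧ d = Decomp.cons e d' := by
  obtain ⟨l, ws, vs⟩ := d
  dsimp only [IsDecomp] at hd
  cases htop : G.pedges (ws (Fin.last l)) with
  | cons f t' =>
    have hf := hd.edges_eq.trans (altEdges_eq_cons_of_pedges_last_eq_cons htop)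
    obtain rfl : f = e := List.head_eq_of_cons_eq (hf.symm.trans hw)
    have hm := (hd.pieces (Fin.last l)).mutReach (e := f) (by simp [htop])
    refine ⟨⟨l, update ws (Fin.last l) (G.tailPath (ws (Fin.last l))), vs⟩,
      hd.tailPath_of_pedges_last_eq_cons htop, ?_⟩
    rw [Decomp.cons, if_pos hm, update_self, update_idem, consPath_tailPath htop, update_eq_self]
  | nil =>
    cases l with
    | zero => exact absurd (hw.symm.trans (hd.edges_eq.trans htop)) (List.cons_ne_nil e t)
    | succ l =>
      obtain rfl : vs (Fin.last l) = e := by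
        simp only [hd.edges_eq, altEdges, htop, List.nil_append, List.cons.injEq] at hw
        exact hw.1
      have hm := hd.crossings (Fin.last l)
      have hlast : ws (Fin.last (l + 1)) = G.vpath (G.rng (vs (Fin.last l))) := by
        refine Path.ext (by simp [htop]) ?_
        rw [← Fin.succ_last, hd.chain_rng]
        rfl
      refine ⟨⟨l, Fin.init ws, Fin.init vs⟩, hd.tailPath_of_pedges_last_eq_nil htop, ?_⟩
      rw [Decomp.cons, if_neg hm, ← hlast]
      simp only [Fin.snoc_init_self]

theorem IsDecomp.eq_single_of_pedges_eq_nil {w : G.Path} {d : G.Decomp} (hd : G.IsDecomp w d)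
    (hw : G.pedges w = []) : d = ⟨0, fun _ => w, Fin.elim0⟩ := by
  obtain ⟨_ | l, ws, vs⟩ := d
  · have hws : ws = fun _ => w := by
      funext i
      rw [Fin.fin_one_eq_zero i]
      exact Path.ext hd.edges_eq.symm hd.src_eq.symm
    rw [hws, Subsingleton.elim vs Fin.elim0]
  · simp [hd.edges_eq, altEdges] at hw

theorem exists_isDecomp (w : G.Path) : ∃ d, G.IsDecomp w d := by
  induction hL : G.pedges w generalizing w with
  | nil =>
    exact ⟨⟨0, fun _ => w, Fin.elim0⟩,
      isDecompOf_single (inOneComponent_of_pedges_eq_nil hL)⟩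
  | cons e t ih =>
    obtain ⟨d, hd⟩ := ih (G.tailPath w) (by rw [pedges_tailPath, hL, List.tail_cons])
    rw [← consPath_tailPath hL]
    exact ⟨_, hd.consPath (src_eq_prng_tailPath hL)⟩

theorem IsDecomp.unique {w : G.Path} {d d' : G.Decomp} (hd : G.IsDecomp w d)
    (hd' : G.IsDecomp w d') : d = d' := by
  induction hL : G.pedges w generalizing w d d' with
  | nil => rw [hd.eq_single_of_pedges_eq_nil hL, hd'.eq_single_of_pedges_eq_nil hL]
  | cons e t ih =>
    obtain ⟨d₁, hd₁, rfl⟩ := hd.exists_eq_cons hL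
    obtain ⟨d₁', hd₁', rfl⟩ := hd'.exists_eq_cons hL
    rw [ih hd₁ hd₁' (by rw [pedges_tailPath, hL, List.tail_cons])]

end DGraph

/-- **Lemma (Davidson–Katsoulis, Lemma 4).**
Every path `w ∈ 𝔽⁺(G)` decomposes uniquely as a product
`w = w_l v_l w_{l-1} v_{l-1} ⋯ w_1 v_1 w_0` where each `w_i` is a vertex or a path whose
edges lie in a single transitive component of `G`, and each `v_i` is an edge whose source
and range lie in distinct transitive components. -/
theorem unique_alternating_decomposition (G : DGraph) (w : G.Path) :
    ∃! d : (l : ℕ) × ((Fin (l + 1) → G.Path) × (Fin l → G.E)),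
      G.IsDecompOf w d.1 d.2.1 d.2.2 := by
  obtain ⟨d, hd⟩ := DGraph.exists_isDecomp w
  exact ⟨d, hd, fun d' hd' => DGraph.IsDecomp.unique hd' hd⟩
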